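/- Let (V, P) be a finite irreducible Markov chain with stationary distribution π and at least two states, and let π_* = min_x π(x). For f : [0,1] → ℝ and r ∈ [π_*, 1) let C_f(r) = max{C_f(A) : A ⊆ V nonempty and proper, π(A) ≤ r}. Then for all r ∈ [π_*, 1): (i) with f₁(a) = a(1−a): 1 − C_{f₁}(r) ≥ 8·Δ_min·Ψ_min, and moreover 1 − C_{f₁}(r) ≥ 2·Δ_min·Ψ_min/(r(1−r)) whenever r ≤ 1/2; (ii) with f₂(a) = a·log(1/a) (and f₂(0) = 0): 1 − C_{f₂}(r) ≥ e·Δ_min·Ψ_min, and moreover 1 − C_{f₂}(r) ≥ Δ_min·Ψ_min/(2r²·log(1/r)) whenever r ≤ e^{−1/2}; (iii) with f₃(a) = √(a(1−a)): 1 − C_{f₃}(r) ≥ Δ_min·Ψ_min/(4r²(1−r)²) whenever r ≤ 1/2, and 1 − C_{f₃}(r) ≥ 4·Δ_min·Ψ_min whenever r > 1/2. -/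

import Mathlib

open scoped Classical

noncomputable section

namespace Stmt15

variable {V : Type*} [Fintype V]

/-- measure of a finite set of states under `pi`. -/
def meas (pi : V → ℝ) (A : Finset V) : ℝ := ∑ x ∈ A, pi x

/-- ergodic flow `Q(A,y) = ∑_{x∈A} π(x)P(x,y)` from a set to a point. -/
def flowPt (P : V → V → ℝ) (pi : V → ℝ) (A : Finset V) (y : V) : ℝ :=
  ∑ x ∈ A, pi x * P x y

/-- the evolving set `A_u = {y : Q(A,y) ≥ u·π(y)}`. -/
def evolve (P : V → V → ℝ) (pi : V → ℝ) (A : Finset V) (u : ℝ) : Finset V :=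
  Finset.univ.filter fun y => u * pi y ≤ flowPt P pi A y

/-- `f`-congestion of a set: `C_f(A) = (∫₀¹ f(π(A_u)) du)/f(π(A))`. -/
def fCong (f : ℝ → ℝ) (P : V → V → ℝ) (pi : V → ℝ) (A : Finset V) : ℝ :=
  (∫ u in (0:ℝ)..1, f (meas pi (evolve P pi A u))) / f (meas pi A)

/-- `C_f(r) = max{C_f(A) : A nonempty proper, π(A) ≤ r}`. -/
def fCongR (f : ℝ → ℝ) (P : V → V → ℝ) (pi : V → ℝ) (r : ℝ) : ℝ :=
  sSup {c | ∃ A : Finset V, A.Nonempty ∧ A ≠ Finset.univ ∧ meas pi A ≤ r ∧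
    c = fCong f P pi A}

/-- modified ergodic flow `Ψ(A) = (1/2)∫₀¹ |π(A_u) − π(A)| du`. -/
def modFlow (P : V → V → ℝ) (pi : V → ℝ) (A : Finset V) : ℝ :=
  (1 / 2) * ∫ u in (0:ℝ)..1, |meas pi (evolve P pi A u) - meas pi A|

/-- `Ψ_min = min{Ψ(A) : A a nonempty proper subset}`. -/
def psiMin (P : V → V → ℝ) (pi : V → ℝ) : ℝ :=
  sInf {r | ∃ A : Finset V, A.Nonempty ∧ A ≠ Finset.univ ∧ r = modFlow P pi A}

/-- `Δ_min = min{|π(A) − π(B)| : π(A) ≠ π(B)}`. -/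
def deltaMin (pi : V → ℝ) : ℝ :=
  sInf {r | ∃ A B : Finset V, meas pi A ≠ meas pi B ∧ r = |meas pi A - meas pi B|}

/-- `π_* = min_x π(x)`. -/
def piStar (pi : V → ℝ) : ℝ := ⨅ x, pi x

end Stmt15

/-!
For a nonempty proper set `A` put `M = π(A)`, `Δ = Δ_min` and `g(u) = π(A_u)`. Stationarity gives
`∫₀¹ g = M`, and every value of `g` other than `M` is at distance at least `Δ` from `M`, both
being measures of sets. On such values a concave `f` lies below the lines through `(M, f M)` and
`(M ± Δ, f (M ± Δ))`, so integrating against `g`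
yields `∫₀¹ f(g) ≤ f(M) - (2f(M) - f(M+Δ) - f(M-Δ)) Ψ(A) / Δ`. Every bound of the theorem thus
reduces to an estimate `c Δ² f(M) ≤ 2f(M) - f(M+Δ) - f(M-Δ)` of the concavity defect: it equals
`2Δ²` for `f₁`, is at least `Δ²/(2M)` for `f₂` and at least `Δ²/(4 f₃(M)³)` for `f₃`.
-/

open Real Set MeasureTheory

def concavityDefect (f : ℝ → ℝ) (m d : ℝ) : ℝ := 2 * f m - f (m + d) - f (m - d)

theorem ConcaveOn.concavityDefect_nonneg {s : Set ℝ} {f : ℝ → ℝ} (hf : ConcaveOn ℝ s f)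
    {m d : ℝ} (hmd : m + d ∈ s) (hmd' : m - d ∈ s) : 0 ≤ concavityDefect f m d := by
  have := hf.2 hmd hmd' (by norm_num : (0:ℝ) ≤ 1 / 2) (by norm_num : (0:ℝ) ≤ 1 / 2)
    (by norm_num)
  rw [smul_eq_mul, smul_eq_mul, smul_eq_mul, smul_eq_mul,
    show 1 / 2 * (m + d) + 1 / 2 * (m - d) = m by ring] at this
  rw [concavityDefect]
  linarith

theorem ConcaveOn.le_sub_concavityDefect_mul_abs {s : Set ℝ} {f : ℝ → ℝ}
    (hf : ConcaveOn ℝ s f) {m d x : ℝ} (hd : 0 < d) (hm : m ∈ s) (hmd : m + d ∈ s)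
    (hmd' : m - d ∈ s) (hx : x ∈ s) (hgap : x = m ∨ d ≤ |x - m|) :
    f x ≤ f m + (f (m + d) - f (m - d)) / (2 * d) * (x - m)
      - concavityDefect f m d / (2 * d) * |x - m| := by
  rcases hgap with rfl | hgap
  · simp
  rcases le_or_gt m x with hmx | hxm
  · rw [abs_of_nonneg (sub_nonneg.2 hmx)] at hgap ⊢
    have hsec := hf.neg.secant_mono hm hmd hx (by linarith) (by linarith) (by linarith)
    simp only [Pi.neg_apply, neg_sub_neg, add_sub_cancel_left] at hsec
    rw [le_div_iff₀ (by linarith)] at hsec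
    calc f x ≤ f m - (f m - f (m + d)) / d * (x - m) := by linarith
      _ = _ := by rw [concavityDefect]; field_simp; ring
  · rw [abs_of_neg (sub_neg.2 hxm)] at hgap ⊢
    have hsec := hf.neg.secant_mono hm hx hmd' (by linarith) (by linarith) (by linarith)
    simp only [Pi.neg_apply, neg_sub_neg, sub_sub_cancel_left, div_neg] at hsec
    rw [← neg_sub (f x), neg_div, neg_le_neg_iff, le_div_iff_of_neg (by linarith)] at hsec
    calc f x ≤ f m + (f m - f (m - d)) / d * (x - m) := by linarith
      _ = _ := by rw [concavityDefect]; field_simp; ring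

namespace Real

/-- This is `s ≤ sinh s` at `s = -log y`. -/
lemma sq_sub_one_div_two_le_mul_log {y : ℝ} (hy0 : 0 ≤ y) (hy1 : y ≤ 1) :
    (y ^ 2 - 1) / 2 ≤ y * log y := by
  rcases hy0.eq_or_lt with rfl | hy0
  · norm_num
  have hsinh : -log y ≤ sinh (-log y) :=
    self_le_sinh_iff.2 (neg_nonneg.2 (log_nonpos hy0.le hy1))
  rw [sinh_eq, neg_neg, exp_log hy0, exp_neg, exp_log hy0] at hsinh
  have := mul_le_mul_of_nonneg_left hsinh hy0.le
  field_simp at this ⊢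
  linarith

lemma negMulLog_pos {x : ℝ} (hx0 : 0 < x) (hx1 : x < 1) : 0 < negMulLog x := by
  rw [negMulLog, neg_mul]
  exact neg_pos.2 (mul_log_neg hx0 hx1)

lemma negMulLog_le_exp_neg_one {x : ℝ} (hx : 0 ≤ x) : negMulLog x ≤ exp (-1) := by
  rcases hx.eq_or_lt with rfl | hx
  · simp [exp_nonneg]
  have h := add_one_le_exp (-log x - 1)
  rw [exp_sub, exp_neg, exp_log hx] at h
  have := mul_le_mul_of_nonneg_left h hx.le
  rw [negMulLog, exp_neg]
  field_simp at this ⊢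
  linarith

lemma self_mul_negMulLog (t : ℝ) : t * negMulLog t = negMulLog (t ^ 2) / 2 := by
  rw [sq, negMulLog_mul]
  ring

lemma monotoneOn_self_mul_negMulLog :
    MonotoneOn (fun t => t * negMulLog t) (Icc 0 (exp (-(1 / 2)))) := by
  intro s hs t ht hst
  have hsq : ∀ u ∈ Icc 0 (exp (-(1 / 2))), u ^ 2 ∈ Icc 0 (exp (-1)) := fun u hu =>
    ⟨sq_nonneg u, by
      calc u ^ 2 ≤ exp (-(1 / 2)) ^ 2 := pow_le_pow_left₀ hu.1 hu.2 2
        _ = exp (-1) := by rw [← exp_nat_mul]; norm_num⟩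
  have := mul_log_strictAntiOn.antitoneOn (hsq s hs) (hsq t ht) (pow_le_pow_left₀ hs.1 hst 2)
  change s * negMulLog s ≤ t * negMulLog t
  rw [self_mul_negMulLog, self_mul_negMulLog, negMulLog_eq_neg]
  linarith

lemma mul_log_one_div_eq_negMulLog : (fun a : ℝ => a * log (1 / a)) = negMulLog := by
  ext a
  rw [negMulLog, one_div, log_inv]
  ring

end Real

lemma concaveOn_mul_one_sub : ConcaveOn ℝ univ (fun a : ℝ => a * (1 - a)) := by
  refine ⟨convex_univ, fun x _ y _ p q hp hq hpq => ?_⟩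
  simp only [smul_eq_mul]
  obtain rfl : q = 1 - p := by linarith
  nlinarith [mul_nonneg (mul_nonneg hp hq) (sq_nonneg (x - y))]

lemma concaveOn_sqrt_mul_one_sub : ConcaveOn ℝ (Icc 0 1) (fun a : ℝ => √(a * (1 - a))) := by
  set f := fun a : ℝ => a * (1 - a)
  have himage : f '' Icc 0 1 ⊆ Ici 0 := by
    rintro _ ⟨a, ⟨ha0, ha1⟩, rfl⟩
    exact mul_nonneg ha0 (by linarith)
  have hconvex : Convex ℝ (f '' Icc 0 1) :=
    (isPreconnected_iff_ordConnected.1 (isPreconnected_Icc.image f (by fun_prop))).convex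
  exact (strictConcaveOn_sqrt.concaveOn.subset himage hconvex).comp
    (concaveOn_mul_one_sub.subset (subset_univ _) (convex_Icc 0 1))
    (sqrt_monotone.monotoneOn _)

lemma concavityDefect_mul_one_sub (m d : ℝ) :
    concavityDefect (fun a => a * (1 - a)) m d = 2 * d ^ 2 := by
  simp only [concavityDefect]
  ring

lemma sq_div_two_mul_le_concavityDefect_negMulLog {m d : ℝ} (hd : 0 < d) (hdm : d ≤ m) :
    d ^ 2 / (2 * m) ≤ concavityDefect negMulLog m d := by
  have hm : 0 < m := hd.trans_le hdm
  -- with `m + d = m z` and `m - d = m y` the defect is `m (z log z + y log y)`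
  obtain ⟨z, hmz⟩ : ∃ z, m + d = m * z := ⟨(m + d) / m, by field_simp⟩
  obtain ⟨y, hmy⟩ : ∃ y, m - d = m * y := ⟨(m - d) / m, by field_simp⟩
  have hz : z - 1 ≤ z * log z := self_sub_one_le_mul_log (by nlinarith)
  have hy : (y ^ 2 - 1) / 2 ≤ y * log y :=
    sq_sub_one_div_two_le_mul_log (by nlinarith) (by nlinarith)
  have hzy : z + y = 2 := by nlinarith
  have hdefect : concavityDefect negMulLog m d = m * (z * log z + y * log y) := by
    rw [concavityDefect, hmz, hmy, negMulLog_mul, negMulLog_mul]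
    simp only [negMulLog]
    linear_combination (m * log m) * hzy
  obtain rfl : d = m * z - m := by linarith
  obtain rfl : y = 2 - z := by linarith
  calc (m * z - m) ^ 2 / (2 * m) = m * ((z - 1) + ((2 - z) ^ 2 - 1) / 2) := by
        field_simp; ring
    _ ≤ m * (z * log z + (2 - z) * log (2 - z)) := by gcongr
    _ = _ := hdefect.symm

lemma sq_div_le_concavityDefect_sqrt_mul_one_sub {m d : ℝ} (hd : 0 < d) (hdm : d ≤ m)
    (hdm' : d ≤ 1 - m) :
    d ^ 2 / (4 * √(m * (1 - m)) ^ 3) ≤ concavityDefect (fun a => √(a * (1 - a))) m d := by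
  set s := √(m * (1 - m))
  set a := √((m + d) * (1 - (m + d)))
  set b := √((m - d) * (1 - (m - d)))
  have hs : s ^ 2 = m * (1 - m) := sq_sqrt (by nlinarith)
  have ha : a ^ 2 = (m + d) * (1 - (m + d)) := sq_sqrt (by nlinarith)
  have hb : b ^ 2 = (m - d) * (1 - (m - d)) := sq_sqrt (by nlinarith)
  have hs0 : 0 < s := sqrt_pos.2 (by nlinarith)
  have hab : (a * b) ^ 2 = (s ^ 2 - d ^ 2) ^ 2 - d ^ 2 * (1 - 4 * s ^ 2) := by
    rw [mul_pow, ha, hb, hs]; ring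
  have he : 0 ≤ 1 - 4 * s ^ 2 := by rw [hs]; nlinarith [sq_nonneg (1 - 2 * m)]
  have hW : 0 ≤ 2 * s ^ 4 + 2 * s ^ 2 * d ^ 2 - d ^ 2 := by nlinarith
  have hab' : 2 * s ^ 2 * (a * b) ≤ 2 * s ^ 4 + 2 * s ^ 2 * d ^ 2 - d ^ 2 := by
    refine abs_le_of_sq_le_sq' ?_ hW |>.2
    have : (2 * s ^ 2 * (a * b)) ^ 2 = (2 * s ^ 4 + 2 * s ^ 2 * d ^ 2 - d ^ 2) ^ 2
        - (4 * s ^ 2 * d ^ 4 * (1 - 4 * s ^ 2) + (d ^ 2 * (1 - 4 * s ^ 2)) ^ 2) := by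
      rw [mul_pow, hab]; ring
    rw [this]
    have : 0 ≤ 4 * s ^ 2 * d ^ 4 * (1 - 4 * s ^ 2) := by positivity
    nlinarith
  have hsum : s ^ 2 * (a + b) ^ 2 ≤ 4 * s ^ 4 - d ^ 2 := by nlinarith
  have hsum' : 4 * s ^ 3 * (a + b) ≤ 8 * s ^ 4 - d ^ 2 := by
    refine abs_le_of_sq_le_sq' ?_ (by nlinarith) |>.2
    nlinarith [mul_le_mul_of_nonneg_left hsum (by positivity : (0:ℝ) ≤ 16 * s ^ 4)]
  simp only [concavityDefect]
  rw [div_le_iff₀ (by positivity)]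
  nlinarith

lemma eight_mul_sq_mul_le_concavityDefect_mul_one_sub (m d : ℝ) :
    8 * d ^ 2 * (m * (1 - m)) ≤ concavityDefect (fun a => a * (1 - a)) m d := by
  rw [concavityDefect_mul_one_sub]
  nlinarith [mul_nonneg (sq_nonneg d) (sq_nonneg (1 - 2 * m))]

lemma two_div_mul_sq_mul_le_concavityDefect_mul_one_sub {m d r : ℝ} (hm : 0 < m) (hmr : m ≤ r)
    (hr : r ≤ 1 / 2) :
    2 / (r * (1 - r)) * d ^ 2 * (m * (1 - m)) ≤ concavityDefect (fun a => a * (1 - a)) m d := by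
  have hr0 : 0 < r * (1 - r) := mul_pos (hm.trans_le hmr) (by linarith)
  rw [concavityDefect_mul_one_sub]
  calc 2 / (r * (1 - r)) * d ^ 2 * (m * (1 - m))
      ≤ 2 / (r * (1 - r)) * d ^ 2 * (r * (1 - r)) :=
        mul_le_mul_of_nonneg_left (by nlinarith) (by positivity)
    _ = 2 * d ^ 2 := by
        rw [div_mul_eq_mul_div, div_mul_eq_mul_div, mul_div_cancel_right₀ _ hr0.ne']

lemma exp_one_mul_sq_mul_le_concavityDefect_negMulLog {m d : ℝ} (hd : 0 < d) (hdm : d ≤ m) :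
    exp 1 * d ^ 2 * negMulLog m ≤ concavityDefect negMulLog m d := by
  have hm : 0 < m := hd.trans_le hdm
  refine le_trans ?_ (sq_div_two_mul_le_concavityDefect_negMulLog hd hdm)
  calc exp 1 * d ^ 2 * negMulLog m = d ^ 2 / (2 * m) * (exp 1 * negMulLog (m ^ 2)) := by
        rw [show negMulLog (m ^ 2) = 2 * (m * negMulLog m) by rw [self_mul_negMulLog]; ring]
        field_simp
    _ ≤ d ^ 2 / (2 * m) * (exp 1 * exp (-1)) := by
        gcongr; exact negMulLog_le_exp_neg_one (sq_nonneg m)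
    _ = d ^ 2 / (2 * m) := by rw [← exp_add]; norm_num

lemma one_div_mul_sq_mul_le_concavityDefect_negMulLog {m d r : ℝ} (hd : 0 < d) (hdm : d ≤ m)
    (hmr : m ≤ r) (hr : r ≤ exp (-(1 / 2))) :
    1 / (2 * r ^ 2 * log (1 / r)) * d ^ 2 * negMulLog m ≤ concavityDefect negMulLog m d := by
  have hm : 0 < m := hd.trans_le hdm
  have hr0 : 0 < r := hm.trans_le hmr
  have hr1 : r < 1 := hr.trans_lt (exp_lt_one_iff.2 (by norm_num))
  have hmono : m * negMulLog m ≤ r * negMulLog r :=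
    monotoneOn_self_mul_negMulLog ⟨hm.le, hmr.trans hr⟩ ⟨hr0.le, hr⟩ hmr
  have hlog : r ^ 2 * log (1 / r) = r * negMulLog r := by
    rw [negMulLog, one_div, log_inv]; ring
  have hpos : 0 < r * negMulLog r := mul_pos hr0 (negMulLog_pos hr0 hr1)
  refine le_trans ?_ (sq_div_two_mul_le_concavityDefect_negMulLog hd hdm)
  calc 1 / (2 * r ^ 2 * log (1 / r)) * d ^ 2 * negMulLog m
      = d ^ 2 / (2 * m) * (m * negMulLog m / (r * negMulLog r)) := by
        rw [mul_assoc 2, hlog]; field_simp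
    _ ≤ d ^ 2 / (2 * m) * 1 := by gcongr; exact (div_le_one hpos).2 hmono
    _ = d ^ 2 / (2 * m) := mul_one _

lemma one_div_mul_sq_mul_le_concavityDefect_sqrt_mul_one_sub {m d r : ℝ} (hd : 0 < d)
    (hdm : d ≤ m) (hdm' : d ≤ 1 - m) (hmr : m ≤ r) (hr : r ≤ 1 / 2) :
    1 / (4 * r ^ 2 * (1 - r) ^ 2) * d ^ 2 * √(m * (1 - m))
      ≤ concavityDefect (fun a => √(a * (1 - a))) m d := by
  have hm : 0 < m * (1 - m) := mul_pos (hd.trans_le hdm) (by linarith)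
  have hs : √(m * (1 - m)) ^ 4 = (m * (1 - m)) ^ 2 := by
    rw [show 4 = 2 * 2 by rfl, pow_mul, sq_sqrt hm.le]
  have hr0 : 0 < r * (1 - r) := mul_pos (by linarith) (by linarith)
  refine le_trans ?_ (sq_div_le_concavityDefect_sqrt_mul_one_sub hd hdm hdm')
  calc 1 / (4 * r ^ 2 * (1 - r) ^ 2) * d ^ 2 * √(m * (1 - m))
      = d ^ 2 / (4 * √(m * (1 - m)) ^ 3) * ((m * (1 - m)) ^ 2 / (r * (1 - r)) ^ 2) := by
        rw [← hs]; field_simp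
    _ ≤ d ^ 2 / (4 * √(m * (1 - m)) ^ 3) * 1 := by
        gcongr
        exact (div_le_one (by positivity)).2 (pow_le_pow_left₀ hm.le (by nlinarith) 2)
    _ = _ := mul_one _

lemma four_mul_sq_mul_le_concavityDefect_sqrt_mul_one_sub {m d : ℝ} (hd : 0 < d)
    (hdm : d ≤ m) (hdm' : d ≤ 1 - m) :
    4 * d ^ 2 * √(m * (1 - m)) ≤ concavityDefect (fun a => √(a * (1 - a))) m d := by
  have hm : 0 < m * (1 - m) := mul_pos (hd.trans_le hdm) (by linarith)
  have hs : √(m * (1 - m)) ^ 4 = (m * (1 - m)) ^ 2 := by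
    rw [show 4 = 2 * 2 by rfl, pow_mul, sq_sqrt hm.le]
  refine le_trans ?_ (sq_div_le_concavityDefect_sqrt_mul_one_sub hd hdm hdm')
  calc 4 * d ^ 2 * √(m * (1 - m))
      = d ^ 2 / (4 * √(m * (1 - m)) ^ 3) * (16 * (m * (1 - m)) ^ 2) := by
        rw [← hs]; field_simp; norm_num
    _ ≤ d ^ 2 / (4 * √(m * (1 - m)) ^ 3) * 1 := by
        gcongr; nlinarith [sq_nonneg (1 - 2 * m)]
    _ = _ := mul_one _

namespace Stmt15

variable {V : Type*} {P : V → V → ℝ} {pi : V → ℝ}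

lemma meas_pos (hpi0 : ∀ x, 0 < pi x) {A : Finset V} (hA : A.Nonempty) : 0 < meas pi A :=
  Finset.sum_pos (fun x _ => hpi0 x) hA

lemma meas_empty (pi : V → ℝ) : meas pi ∅ = 0 := Finset.sum_empty

lemma meas_ne_meas_empty (hpi0 : ∀ x, 0 < pi x) {A : Finset V} (hA : A.Nonempty) :
    meas pi A ≠ meas pi ∅ := by
  rw [meas_empty]; exact (meas_pos hpi0 hA).ne'

lemma meas_lt_one [Fintype V] (hpi0 : ∀ x, 0 < pi x) (hpi1 : ∑ x, pi x = 1) {A : Finset V}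
    (hA : A ≠ Finset.univ) : meas pi A < 1 := by
  obtain ⟨y, hy⟩ : ∃ y, y ∉ A := by simpa [Finset.eq_univ_iff_forall] using hA
  rw [← hpi1]
  exact Finset.sum_lt_sum_of_subset (Finset.subset_univ A) (Finset.mem_univ y) hy (hpi0 y)
    fun x _ _ => (hpi0 x).le

lemma meas_mem_Icc [Fintype V] (hpi0 : ∀ x, 0 < pi x) (hpi1 : ∑ x, pi x = 1) (A : Finset V) :
    meas pi A ∈ Icc 0 1 :=
  ⟨Finset.sum_nonneg fun x _ => (hpi0 x).le,
    hpi1 ▸ Finset.sum_le_sum_of_subset_of_nonneg (Finset.subset_univ A)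
      fun x _ _ => (hpi0 x).le⟩

lemma deltaMin_le (pi : V → ℝ) {A B : Finset V} (h : meas pi A ≠ meas pi B) :
    deltaMin pi ≤ |meas pi A - meas pi B| :=
  csInf_le ⟨0, by rintro _ ⟨_, _, _, rfl⟩; exact abs_nonneg _⟩ ⟨A, B, h, rfl⟩

lemma deltaMin_le_meas (hpi0 : ∀ x, 0 < pi x) {A : Finset V} (hA : A.Nonempty) :
    deltaMin pi ≤ meas pi A := by
  have h := deltaMin_le pi (meas_ne_meas_empty hpi0 hA)
  rwa [meas_empty, sub_zero, abs_of_pos (meas_pos hpi0 hA)] at h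

lemma deltaMin_le_one_sub_meas [Fintype V] (hpi0 : ∀ x, 0 < pi x) (hpi1 : ∑ x, pi x = 1)
    {A : Finset V} (hA : A ≠ Finset.univ) : deltaMin pi ≤ 1 - meas pi A := by
  have hlt := meas_lt_one hpi0 hpi1 hA
  have h : meas pi Finset.univ = 1 := hpi1
  simpa [h, abs_of_pos (sub_pos.2 hlt)] using deltaMin_le pi (A := Finset.univ) (B := A) (by
    rw [h]; exact hlt.ne')

lemma deltaMin_pos [Fintype V] {A B : Finset V} (h : meas pi A ≠ meas pi B) :
    0 < deltaMin pi := by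
  set S := {r | ∃ A B : Finset V, meas pi A ≠ meas pi B ∧ r = |meas pi A - meas pi B|}
  have hfin : S.Finite :=
    (Set.finite_range fun p : Finset V × Finset V => |meas pi p.1 - meas pi p.2|).subset
      (by rintro _ ⟨A, B, _, rfl⟩; exact ⟨(A, B), rfl⟩)
  obtain ⟨A', B', hne, heq⟩ := Set.Nonempty.csInf_mem (s := S) ⟨_, A, B, h, rfl⟩ hfin
  rw [deltaMin, heq]
  exact abs_pos.2 (sub_ne_zero.2 hne)

lemma modFlow_nonneg [Fintype V] (P : V → V → ℝ) (pi : V → ℝ) (A : Finset V) :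
    0 ≤ modFlow P pi A :=
  mul_nonneg (by norm_num) (intervalIntegral.integral_nonneg zero_le_one fun _ _ => abs_nonneg _)

lemma psiMin_nonneg [Fintype V] (P : V → V → ℝ) (pi : V → ℝ) : 0 ≤ psiMin P pi :=
  Real.sInf_nonneg (by rintro _ ⟨A, _, _, rfl⟩; exact modFlow_nonneg P pi A)

lemma psiMin_le_modFlow [Fintype V] (P : V → V → ℝ) (pi : V → ℝ) {A : Finset V}
    (hA : A.Nonempty) (hA' : A ≠ Finset.univ) :
    psiMin P pi ≤ modFlow P pi A :=
  csInf_le ⟨0, by rintro _ ⟨B, _, _, rfl⟩; exact modFlow_nonneg P pi B⟩ ⟨A, hA, hA', rfl⟩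

lemma intervalIntegrable_comp_evolve [Fintype V] (P : V → V → ℝ) (pi : V → ℝ) (A : Finset V)
    (φ : Finset V → ℝ) : IntervalIntegrable (fun u => φ (evolve P pi A u)) volume 0 1 := by
  let : MeasurableSpace (Finset V) := ⊤
  have hmeas : Measurable (evolve P pi A) := by
    refine measurable_to_countable' fun B => ?_
    have : evolve P pi A ⁻¹' {B} = ⋂ y, {u | u * pi y ≤ flowPt P pi A y ↔ y ∈ B} := by
      ext u
      simp [evolve, Finset.ext_iff]
    rw [this]
    refine MeasurableSet.iInter fun y => ?_
    by_cases hy : y ∈ B <;> simp only [hy, iff_true, iff_false]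
    · exact measurableSet_le (measurable_id.mul_const _) measurable_const
    · exact (measurableSet_le (measurable_id.mul_const _) measurable_const).compl
  refine (intervalIntegrable_const (c := ∑ B, ‖φ B‖)).mono_fun'
    (measurable_from_top.comp hmeas).aestronglyMeasurable (ae_of_all _ fun u => ?_)
  exact Finset.single_le_sum (f := fun B => ‖φ B‖) (fun _ _ => norm_nonneg _)
    (Finset.mem_univ _)

lemma integral_meas_evolve [Fintype V] (hP0 : ∀ x y, 0 ≤ P x y) (hP1 : ∀ x, ∑ y, P x y = 1)
    (hpi0 : ∀ x, 0 < pi x) (hstat : ∀ y, ∑ x, pi x * P x y = pi y) (A : Finset V) :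
    ∫ u in (0:ℝ)..1, meas pi (evolve P pi A u) = meas pi A := by
  have hflow : ∀ y, flowPt P pi A y / pi y ∈ Icc 0 1 := fun y =>
    ⟨div_nonneg (Finset.sum_nonneg fun x _ => mul_nonneg (hpi0 x).le (hP0 x y)) (hpi0 y).le,
      (div_le_one (hpi0 y)).2 (hstat y ▸ Finset.sum_le_sum_of_subset_of_nonneg
        (Finset.subset_univ A) fun x _ _ => mul_nonneg (hpi0 x).le (hP0 x y))⟩
  have hindicator : ∀ u, meas pi (evolve P pi A u)
      = ∑ y, {u | u ≤ flowPt P pi A y / pi y}.indicator (fun _ => pi y) u := by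
    intro u
    rw [meas, evolve, Finset.sum_filter]
    refine Finset.sum_congr rfl fun y _ => ?_
    simp [Set.indicator, le_div_iff₀ (hpi0 y)]
  simp_rw [hindicator]
  rw [intervalIntegral.integral_finsetSum]
  · simp_rw [intervalIntegral.integral_indicator (hflow _), intervalIntegral.integral_const,
      smul_eq_mul, sub_zero, div_mul_cancel₀ _ (hpi0 _).ne', flowPt]
    rw [Finset.sum_comm]
    simp_rw [← Finset.mul_sum, hP1, mul_one, meas]
  · intro y _
    convert intervalIntegrable_comp_evolve P pi A fun B => if y ∈ B then pi y else 0 using 1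
    ext u
    simp [evolve, Set.indicator, le_div_iff₀ (hpi0 y)]

theorem integral_le_sub_concavityDefect_mul_modFlow [Fintype V] (hP0 : ∀ x y, 0 ≤ P x y)
    (hP1 : ∀ x, ∑ y, P x y = 1) (hpi0 : ∀ x, 0 < pi x) (hpi1 : ∑ x, pi x = 1)
    (hstat : ∀ y, ∑ x, pi x * P x y = pi y) {f : ℝ → ℝ} (hf : ConcaveOn ℝ (Icc 0 1) f)
    {A : Finset V} (hA : A.Nonempty) (hA' : A ≠ Finset.univ) :
    ∫ u in (0:ℝ)..1, f (meas pi (evolve P pi A u)) ≤ f (meas pi A)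
      - concavityDefect f (meas pi A) (deltaMin pi) / deltaMin pi * modFlow P pi A := by
  set M := meas pi A
  set Δ := deltaMin pi
  set g := fun u => meas pi (evolve P pi A u)
  have hΔ : 0 < Δ := deltaMin_pos (meas_ne_meas_empty hpi0 hA)
  have hΔM : Δ ≤ M := deltaMin_le_meas hpi0 hA
  have hΔM' : Δ ≤ 1 - M := deltaMin_le_one_sub_meas hpi0 hpi1 hA'
  set σ := (f (M + Δ) - f (M - Δ)) / (2 * Δ)
  set τ := concavityDefect f M Δ / (2 * Δ)
  have hpointwise : ∀ u ∈ Icc (0:ℝ) 1, f (g u) ≤ f M + σ * (g u - M) - τ * |g u - M| :=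
    fun u _ => hf.le_sub_concavityDefect_mul_abs hΔ (meas_mem_Icc hpi0 hpi1 A)
      ⟨by linarith, by linarith⟩ ⟨by linarith, by linarith⟩ (meas_mem_Icc hpi0 hpi1 _)
      (or_iff_not_imp_left.2 (deltaMin_le pi))
  have hint : ∀ φ : ℝ → ℝ, IntervalIntegrable (fun u => φ (g u)) volume 0 1 :=
    fun φ => intervalIntegrable_comp_evolve P pi A fun B => φ (meas pi B)
  have hg : ∫ u in (0:ℝ)..1, g u = M := integral_meas_evolve hP0 hP1 hpi0 hstat A
  have habs : ∫ u in (0:ℝ)..1, |g u - M| = 2 * modFlow P pi A := by rw [modFlow]; ring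
  have hgi : IntervalIntegrable (fun u => g u) volume 0 1 := hint id
  have hσ : IntervalIntegrable (fun u => σ * (g u - M)) volume 0 1 := hint fun x => σ * (x - M)
  have hτ : IntervalIntegrable (fun u => τ * |g u - M|) volume 0 1 := hint fun x => τ * |x - M|
  calc ∫ u in (0:ℝ)..1, f (g u)
      ≤ ∫ u in (0:ℝ)..1, (f M + σ * (g u - M) - τ * |g u - M|) :=
        intervalIntegral.integral_mono_on zero_le_one (hint f)
          (hint fun x => f M + σ * (x - M) - τ * |x - M|) hpointwise
    _ = f M + σ * ((∫ u in (0:ℝ)..1, g u) - M) - τ * ∫ u in (0:ℝ)..1, |g u - M| := by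
        rw [intervalIntegral.integral_sub (intervalIntegrable_const.add hσ) hτ,
          intervalIntegral.integral_add intervalIntegrable_const hσ,
          intervalIntegral.integral_const_mul, intervalIntegral.integral_const_mul,
          intervalIntegral.integral_sub hgi intervalIntegrable_const]
        simp
    _ = _ := by rw [hg, habs]; ring

lemma fCong_le_of_concavityDefect [Fintype V] (hP0 : ∀ x y, 0 ≤ P x y)
    (hP1 : ∀ x, ∑ y, P x y = 1) (hpi0 : ∀ x, 0 < pi x) (hpi1 : ∑ x, pi x = 1)
    (hstat : ∀ y, ∑ x, pi x * P x y = pi y) {f : ℝ → ℝ} (hf : ConcaveOn ℝ (Icc 0 1) f)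
    {A : Finset V} (hA : A.Nonempty) (hA' : A ≠ Finset.univ) (hfA : 0 < f (meas pi A)) {c : ℝ}
    (hdefect :
      c * deltaMin pi ^ 2 * f (meas pi A) ≤ concavityDefect f (meas pi A) (deltaMin pi)) :
    fCong f P pi A ≤ 1 - c * deltaMin pi * psiMin P pi := by
  have hΔ : 0 < deltaMin pi := deltaMin_pos (meas_ne_meas_empty hpi0 hA)
  have hΔM := deltaMin_le_meas hpi0 hA
  have hΔM' := deltaMin_le_one_sub_meas hpi0 hpi1 hA'
  have hslope : c * deltaMin pi * f (meas pi A)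
      ≤ concavityDefect f (meas pi A) (deltaMin pi) / deltaMin pi := by
    rw [le_div_iff₀ hΔ]; linarith
  rw [fCong, div_le_iff₀ hfA]
  calc ∫ u in (0:ℝ)..1, f (meas pi (evolve P pi A u))
      ≤ f (meas pi A)
        - concavityDefect f (meas pi A) (deltaMin pi) / deltaMin pi * modFlow P pi A :=
        integral_le_sub_concavityDefect_mul_modFlow hP0 hP1 hpi0 hpi1 hstat hf hA hA'
    _ ≤ f (meas pi A) - c * deltaMin pi * f (meas pi A) * psiMin P pi := by
        have := mul_le_mul hslope (psiMin_le_modFlow P pi hA hA') (psiMin_nonneg P pi)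
          (div_nonneg (hf.concavityDefect_nonneg ⟨by linarith, by linarith⟩
            ⟨by linarith, by linarith⟩) hΔ.le)
        linarith
    _ = (1 - c * deltaMin pi * psiMin P pi) * f (meas pi A) := by ring

theorem mul_deltaMin_mul_psiMin_le_one_sub_fCongR [Fintype V] (hP0 : ∀ x y, 0 ≤ P x y)
    (hP1 : ∀ x, ∑ y, P x y = 1) (hpi0 : ∀ x, 0 < pi x) (hpi1 : ∑ x, pi x = 1)
    (hstat : ∀ y, ∑ x, pi x * P x y = pi y) (hcard : 2 ≤ Fintype.card V) {r : ℝ}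
    (hr : piStar pi ≤ r) {f : ℝ → ℝ} (hf : ConcaveOn ℝ (Icc 0 1) f)
    (hfpos : ∀ a ∈ Ioo 0 1, 0 < f a) {c : ℝ}
    (hdefect : ∀ m d, 0 < d → d ≤ m → d ≤ 1 - m → m ≤ r →
      c * d ^ 2 * f m ≤ concavityDefect f m d) :
    c * deltaMin pi * psiMin P pi ≤ 1 - fCongR f P pi r := by
  have hbound : ∀ A : Finset V, A.Nonempty → A ≠ Finset.univ → meas pi A ≤ r →
      fCong f P pi A ≤ 1 - c * deltaMin pi * psiMin P pi := fun A hA hA' hAr =>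
    fCong_le_of_concavityDefect hP0 hP1 hpi0 hpi1 hstat hf hA hA'
      (hfpos _ ⟨meas_pos hpi0 hA, meas_lt_one hpi0 hpi1 hA'⟩)
      (hdefect _ _ (deltaMin_pos (meas_ne_meas_empty hpi0 hA)) (deltaMin_le_meas hpi0 hA)
        (deltaMin_le_one_sub_meas hpi0 hpi1 hA') hAr)
  have : Nonempty V := Fintype.card_pos_iff.1 (by omega)
  obtain ⟨x, hx⟩ := exists_eq_ciInf_of_finite (f := pi)
  have hsingleton : ({x} : Finset V) ≠ Finset.univ := fun h => by
    have := congrArg Finset.card h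
    rw [Finset.card_singleton, Finset.card_univ] at this
    omega
  have hxr : meas pi {x} ≤ r := by rwa [meas, Finset.sum_singleton, hx]
  have : fCongR f P pi r ≤ 1 - c * deltaMin pi * psiMin P pi :=
    csSup_le ⟨_, {x}, Finset.singleton_nonempty x, hsingleton, hxr, rfl⟩ <| by
      rintro _ ⟨A, hA, hA', hAr, rfl⟩
      exact hbound A hA hA' hAr
  linarith

theorem stmt15_general {V : Type*} [Fintype V] (P : V → V → ℝ) (pi : V → ℝ)
    (hP0 : ∀ x y, 0 ≤ P x y) (hP1 : ∀ x, ∑ y, P x y = 1)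
    (hpi0 : ∀ x, 0 < pi x) (hpi1 : ∑ x, pi x = 1)
    (hstat : ∀ y, ∑ x, pi x * P x y = pi y)
    (hcard : 2 ≤ Fintype.card V)
    (r : ℝ) (hr1 : piStar pi ≤ r) :
    (8 * deltaMin pi * psiMin P pi ≤
        1 - fCongR (fun a => a * (1 - a)) P pi r) ∧
    (r ≤ 1 / 2 →
      2 * deltaMin pi * psiMin P pi / (r * (1 - r)) ≤
        1 - fCongR (fun a => a * (1 - a)) P pi r) ∧
    (Real.exp 1 * deltaMin pi * psiMin P pi ≤
        1 - fCongR (fun a => a * Real.log (1 / a)) P pi r) ∧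
    (r ≤ Real.exp (-(1 / 2)) →
      deltaMin pi * psiMin P pi / (2 * r ^ 2 * Real.log (1 / r)) ≤
        1 - fCongR (fun a => a * Real.log (1 / a)) P pi r) ∧
    (r ≤ 1 / 2 →
      deltaMin pi * psiMin P pi / (4 * r ^ 2 * (1 - r) ^ 2) ≤
        1 - fCongR (fun a => Real.sqrt (a * (1 - a))) P pi r) ∧
    (1 / 2 < r →
      4 * deltaMin pi * psiMin P pi ≤
        1 - fCongR (fun a => Real.sqrt (a * (1 - a))) P pi r) := by
  have bound := @mul_deltaMin_mul_psiMin_le_one_sub_fCongR V P pi _ hP0 hP1 hpi0 hpi1 hstat hcard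
    r hr1
  have hf₁ : ConcaveOn ℝ (Icc 0 1) fun a : ℝ => a * (1 - a) :=
    concaveOn_mul_one_sub.subset (subset_univ _) (convex_Icc 0 1)
  have hf₂ : ConcaveOn ℝ (Icc 0 1) negMulLog :=
    concaveOn_negMulLog.subset Icc_subset_Ici_self (convex_Icc 0 1)
  have hpos₁ : ∀ a ∈ Ioo (0:ℝ) 1, 0 < a * (1 - a) := fun a ha =>
    mul_pos ha.1 (sub_pos.2 ha.2)
  have hpos₂ : ∀ a ∈ Ioo (0:ℝ) 1, 0 < negMulLog a := fun a ha => negMulLog_pos ha.1 ha.2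
  have hpos₃ : ∀ a ∈ Ioo (0:ℝ) 1, 0 < √(a * (1 - a)) := fun a ha =>
    sqrt_pos.2 (hpos₁ a ha)
  rw [mul_log_one_div_eq_negMulLog]
  refine ⟨?_, fun hr => ?_, ?_, fun hr => ?_, fun hr => ?_, fun _ => ?_⟩
  · exact bound hf₁ hpos₁ fun m d _ _ _ _ =>
      eight_mul_sq_mul_le_concavityDefect_mul_one_sub m d
  · rw [show 2 * deltaMin pi * psiMin P pi / (r * (1 - r))
      = 2 / (r * (1 - r)) * deltaMin pi * psiMin P pi by ring]
    exact bound hf₁ hpos₁ fun m d hd hdm _ hmr =>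
      two_div_mul_sq_mul_le_concavityDefect_mul_one_sub (hd.trans_le hdm) hmr hr
  · exact bound hf₂ hpos₂ fun m d hd hdm _ _ =>
      exp_one_mul_sq_mul_le_concavityDefect_negMulLog hd hdm
  · rw [show deltaMin pi * psiMin P pi / (2 * r ^ 2 * log (1 / r))
      = 1 / (2 * r ^ 2 * log (1 / r)) * deltaMin pi * psiMin P pi by ring]
    exact bound hf₂ hpos₂ fun m d hd hdm _ hmr =>
      one_div_mul_sq_mul_le_concavityDefect_negMulLog hd hdm hmr hr
  · rw [show deltaMin pi * psiMin P pi / (4 * r ^ 2 * (1 - r) ^ 2)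
      = 1 / (4 * r ^ 2 * (1 - r) ^ 2) * deltaMin pi * psiMin P pi by ring]
    exact bound concaveOn_sqrt_mul_one_sub hpos₃ fun m d hd hdm hdm' hmr =>
      one_div_mul_sq_mul_le_concavityDefect_sqrt_mul_one_sub hd hdm hdm' hmr hr
  · exact bound concaveOn_sqrt_mul_one_sub hpos₃ fun m d hd hdm hdm' _ =>
      four_mul_sq_mul_le_concavityDefect_sqrt_mul_one_sub hd hdm hdm'

/-- Lower bounds on `1 − C_f(r)` for `f₁(a) = a(1−a)`, `f₂(a) = a log(1/a)`
and `f₃(a) = √(a(1−a))`, in terms of `Δ_min` and `Ψ_min`. -/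
theorem stmt15 {V : Type*} [Fintype V] [Nonempty V] (P : V → V → ℝ) (pi : V → ℝ)
    (hP0 : ∀ x y, 0 ≤ P x y) (hP1 : ∀ x, ∑ y, P x y = 1)
    (hirr : ∀ x y : V, ∃ t : ℕ, 0 < (Matrix.of P ^ t) x y)
    (hpi0 : ∀ x, 0 < pi x) (hpi1 : ∑ x, pi x = 1)
    (hstat : ∀ y, ∑ x, pi x * P x y = pi y)
    (hcard : 2 ≤ Fintype.card V)
    (r : ℝ) (hr1 : piStar pi ≤ r) (hr2 : r < 1) :
    (8 * deltaMin pi * psiMin P pi ≤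
        1 - fCongR (fun a => a * (1 - a)) P pi r) ∧
    (r ≤ 1 / 2 →
      2 * deltaMin pi * psiMin P pi / (r * (1 - r)) ≤
        1 - fCongR (fun a => a * (1 - a)) P pi r) ∧
    (Real.exp 1 * deltaMin pi * psiMin P pi ≤
        1 - fCongR (fun a => a * Real.log (1 / a)) P pi r) ∧
    (r ≤ Real.exp (-(1 / 2)) →
      deltaMin pi * psiMin P pi / (2 * r ^ 2 * Real.log (1 / r)) ≤
        1 - fCongR (fun a => a * Real.log (1 / a)) P pi r) ∧
    (r ≤ 1 / 2 →
      deltaMin pi * psiMin P pi / (4 * r ^ 2 * (1 - r) ^ 2) ≤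
        1 - fCongR (fun a => Real.sqrt (a * (1 - a))) P pi r) ∧
    (1 / 2 < r →
      4 * deltaMin pi * psiMin P pi ≤
        1 - fCongR (fun a => Real.sqrt (a * (1 - a))) P pi r) :=
  stmt15_general P pi hP0 hP1 hpi0 hpi1 hstat hcard r hr1

end Stmt15
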